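/- arXiv:0808.2829 — 6 statements merged into one kernel-verified Lean document; each statement's English description precedes it below -/
import Mathlib

section
/- For every two-mode covariance matrix V whose lowest partially-transposed symplectic eigenvalue satisfies ν(V) ≤ 1, the coherent-state teleportation fidelity satisfies F(V) ≤ 1/(1 + ν(V)). -/
open Matrix Real ComplexOrder

noncomputable section

def J2 : Matrix (Fin 2) (Fin 2) ℝ := !![0, 1; -1, 0]
def Z2 : Matrix (Fin 2) (Fin 2) ℝ := !![1, 0; 0, -1]
def J4 : Matrix (Fin 2 ⊕ Fin 2) (Fin 2 ⊕ Fin 2) ℝ := fromBlocks J2 0 0 J2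

/-- A two-mode covariance matrix: real symmetric with `V + i𝒥 ⪰ 0`. -/
def IsCovMat (V : Matrix (Fin 2 ⊕ Fin 2) (Fin 2 ⊕ Fin 2) ℝ) : Prop :=
  V.IsSymm ∧ (V.map (Complex.ofReal) + Complex.I • J4.map (Complex.ofReal)).PosSemidef

/-- Noise matrix N = Z A Z + Z C + Cᵀ Z + B of the Braunstein-Kimble protocol. -/
def noiseMat (V : Matrix (Fin 2 ⊕ Fin 2) (Fin 2 ⊕ Fin 2) ℝ) : Matrix (Fin 2) (Fin 2) ℝ :=
  Z2 * V.toBlocks₁₁ * Z2 + Z2 * V.toBlocks₁₂ + (V.toBlocks₁₂)ᵀ * Z2 + V.toBlocks₂₂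

/-- Coherent-state teleportation fidelity F = 2/√(4 + 2 Tr N + det N). -/
def Fid (V : Matrix (Fin 2 ⊕ Fin 2) (Fin 2 ⊕ Fin 2) ℝ) : ℝ :=
  2 / Real.sqrt (4 + 2 * (noiseMat V).trace + (noiseMat V).det)

def SigmaV (V : Matrix (Fin 2 ⊕ Fin 2) (Fin 2 ⊕ Fin 2) ℝ) : ℝ :=
  (V.toBlocks₁₁).det + (V.toBlocks₂₂).det - 2 * (V.toBlocks₁₂).det

/-- Lowest partially transposed symplectic eigenvalue ν. -/
def nuPT (V : Matrix (Fin 2 ⊕ Fin 2) (Fin 2 ⊕ Fin 2) ℝ) : ℝ :=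
  Real.sqrt ((SigmaV V - Real.sqrt ((SigmaV V)^2 - 4 * V.det)) / 2)

/-!
Conjugating `V` by the change of quadratures `(q_A, q_B) ↦ (Z q_A + q_B, Z q_A - q_B)` gives a
positive semidefinite block matrix `P = [[N, R], [Rᵀ, M]]` whose upper-left block is the noise
matrix `N`, with `det P = 16 det V` and `det N + det M + 2 det R = 4 Σ`. A Schur-complement argument
combined with the mixed-discriminant inequality for `2 × 2` positive matrices shows
`det P ≤ det N (det M + 2 det R)` whenever `det N < det M + 2 det R`; this says exactly that
`det N / 4` lies above the smaller root `ν²` of `t² - Σ t + det V`. Hence `√(det N) ≥ 2ν`, and since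
`tr N ≥ 2 √(det N)`, we get `4 + 2 tr N + det N ≥ (2 + √(det N))² ≥ (2 + 2ν)²`.
-/

open scoped MatrixOrder

namespace Matrix

lemma IsHermitian.four_mul_det_le_trace_sq {X : Matrix (Fin 2) (Fin 2) ℝ} (hX : X.IsHermitian) :
    4 * X.det ≤ X.trace ^ 2 := by
  have h : X 0 1 = X 1 0 := by simpa using congrFun₂ hX 1 0
  rw [det_fin_two, trace_fin_two, h]
  nlinarith [sq_nonneg (X 0 0 - X 1 1), sq_nonneg (X 1 0)]

lemma PosSemidef.two_mul_sqrt_det_le_trace {X : Matrix (Fin 2) (Fin 2) ℝ} (hX : X.PosSemidef) :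
    2 * √X.det ≤ X.trace := by
  rw [← Real.sqrt_sq hX.trace_nonneg, show (2 : ℝ) = √4 by norm_num, ← Real.sqrt_mul zero_le_four]
  exact Real.sqrt_le_sqrt hX.isHermitian.four_mul_det_le_trace_sq

lemma adjugate_eq_J2_mul_mul_conjTranspose {S : Matrix (Fin 2) (Fin 2) ℝ} (hS : S.IsHermitian) :
    S.adjugate = J2 * S * J2ᴴ := by
  have h : S 0 1 = S 1 0 := by simpa using congrFun₂ hS 1 0
  rw [adjugate_fin_two, J2, conjTranspose_eq_transpose_of_trivial]
  ext i j
  fin_cases i <;> fin_cases j <;> simp [mul_apply, Fin.sum_univ_two, vecMul, dotProduct, h]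

lemma det_add_fin_two (S T : Matrix (Fin 2) (Fin 2) ℝ) :
    (S + T).det = S.det + T.det + (S.adjugate * T).trace := by
  simp only [det_fin_two, adjugate_fin_two, trace_fin_two, mul_apply, Fin.sum_univ_two, add_apply,
    of_apply, cons_val', cons_val_zero, cons_val_one, empty_val', cons_val_fin_one]
  ring

/-- The mixed-discriminant inequality for `2 × 2` positive semidefinite matrices. -/
lemma PosSemidef.two_mul_sqrt_det_mul_det_le_trace_adjugate_mul {S T : Matrix (Fin 2) (Fin 2) ℝ}
    (hS : S.PosSemidef) (hT : T.PosSemidef) :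
    2 * √(S.det * T.det) ≤ (S.adjugate * T).trace := by
  have hadj : S.adjugate.PosSemidef := by
    rw [adjugate_eq_J2_mul_mul_conjTranspose hS.isHermitian]
    exact hS.mul_mul_conjTranspose_same J2
  -- conjugating `T` by `Q = √(adj S)` keeps the trace and multiplies the determinant by `det S`
  set Q := CFC.sqrt S.adjugate
  have hQQ : Q * Q = S.adjugate := CFC.sqrt_mul_sqrt_self S.adjugate hadj.nonneg
  have hQTQ : (Q * T * Q).PosSemidef := by
    have h := hT.mul_mul_conjTranspose_same Q
    rwa [(CFC.sqrt_nonneg S.adjugate).posSemidef.isHermitian.eq] at h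
  have htrace : (Q * T * Q).trace = (S.adjugate * T).trace := by
    rw [trace_mul_cycle, hQQ]
  have hdet : (Q * T * Q).det = S.det * T.det := by
    rw [det_mul, det_mul, mul_right_comm, ← det_mul, hQQ, det_adjugate]
    norm_num
  simpa [htrace, hdet] using hQTQ.two_mul_sqrt_det_le_trace

lemma PosSemidef.det_fromBlocks_eq_zero {𝕜 m n : Type*} [RCLike 𝕜] [Fintype m] [Fintype n]
    [DecidableEq m] [DecidableEq n] {A : Matrix m m 𝕜} {B : Matrix m n 𝕜} {D : Matrix n n 𝕜}
    (hP : (fromBlocks A B Bᴴ D).PosSemidef) (hA : A.det = 0) : (fromBlocks A B Bᴴ D).det = 0 := by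
  obtain ⟨v, hv, hAv⟩ := exists_mulVec_eq_zero_iff.mpr hA
  have hx : (Sum.elim v 0 : m ⊕ n → 𝕜) ≠ 0 := fun h => hv (funext fun i => congrFun h (Sum.inl i))
  refine exists_mulVec_eq_zero_iff.mp ⟨_, hx, (hP.dotProduct_mulVec_zero_iff _).mp ?_⟩
  simp [fromBlocks_mulVec, hAv, dotProduct, Fintype.sum_sum_type]

lemma det_fromBlocks_le_of_det_lt {N R M : Matrix (Fin 2) (Fin 2) ℝ}
    (hP : (fromBlocks N R Rᵀ M).PosSemidef) (hlt : N.det < M.det + 2 * R.det) :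
    (fromBlocks N R Rᵀ M).det ≤ N.det * (M.det + 2 * R.det) := by
  rw [← conjTranspose_eq_transpose_of_trivial] at hP ⊢
  have hN : N.PosSemidef := hP.submatrix Sum.inl
  rcases hN.det_nonneg.eq_or_lt with hN0 | hNpos
  · rw [← hN0, zero_mul, hP.det_fromBlocks_eq_zero hN0.symm]
  have hNpd : N.PosDef := hN.posDef_iff_det_ne_zero.mpr hNpos.ne'
  have : Invertible N := hNpd.isUnit.invertible
  set T := Rᴴ * N⁻¹ * R
  set S := M - T
  have hS : S.PosSemidef := (PosDef.fromBlocks₁₁ R M hNpd).mp hP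
  have hT : T.PosSemidef := hNpd.inv.posSemidef.conjTranspose_mul_mul_same R
  have hdetP : (fromBlocks N R Rᴴ M).det = N.det * S.det := by
    rw [det_fromBlocks₁₁, invOf_eq_nonsing_inv]
  have hdetM : M.det = S.det + T.det + (S.adjugate * T).trace := by
    rw [← det_add_fin_two, sub_add_cancel]
  have habsR : |R.det| = √(N.det * T.det) := by
    rw [← Real.sqrt_sq_eq_abs]
    congr 1
    simp only [T, det_mul, det_nonsing_inv, conjTranspose_eq_transpose_of_trivial, det_transpose,
      Ring.inverse_eq_inv']
    field_simp
  have hτ := hS.two_mul_sqrt_det_mul_det_le_trace_adjugate_mul hT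
  rw [hdetP]
  refine mul_le_mul_of_nonneg_left ?_ hNpos.le
  -- otherwise `det N < det S`, so `tr (adj S T) ≥ 2 √(det S det T) ≥ 2 √(det N det T) = 2 |det R|`
  by_contra! hneg
  have hNS : N.det < S.det := by linarith
  have : 2 * |R.det| ≤ (S.adjugate * T).trace := by
    rw [habsR]
    exact le_trans (by gcongr; exact hT.det_nonneg) hτ
  linarith [neg_abs_le R.det, hT.det_nonneg]

end Matrix

lemma IsCovMat.posSemidef {V : Matrix (Fin 2 ⊕ Fin 2) (Fin 2 ⊕ Fin 2) ℝ} (hV : IsCovMat V) :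
    V.PosSemidef := by
  refine .of_dotProduct_mulVec_nonneg (by simpa [IsHermitian] using hV.1.eq) fun x => ?_
  have h := (Complex.le_def.mp (hV.2.dotProduct_mulVec_nonneg (Complex.ofReal ∘ x))).1
  simpa [dotProduct, mulVec, Complex.re_sum] using h

lemma Z2_mul_self : Z2 * Z2 = 1 := by
  rw [Z2, mul_fin_two, one_fin_two]
  norm_num

def eprMat : Matrix (Fin 2 ⊕ Fin 2) (Fin 2 ⊕ Fin 2) ℝ := fromBlocks Z2 1 Z2 (-1)

lemma det_eprMat : eprMat.det = -4 := by
  have : Invertible Z2 := invertibleOfRightInverse _ _ Z2_mul_self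
  rw [eprMat, det_fromBlocks₁₁, invOf_eq_right_inv Z2_mul_self, Z2_mul_self]
  simp [Z2, det_fin_two, one_apply]
  norm_num

lemma eprMat_mul_fromBlocks_mul_transpose {A B C : Matrix (Fin 2) (Fin 2) ℝ} (hA : A.IsSymm)
    (hB : B.IsSymm) :
    eprMat * fromBlocks A C Cᵀ B * eprMatᵀ
      = fromBlocks (Z2 * A * Z2 + Z2 * C + Cᵀ * Z2 + B) (Z2 * A * Z2 + Cᵀ * Z2 - Z2 * C - B)
          (Z2 * A * Z2 + Cᵀ * Z2 - Z2 * C - B)ᵀ (Z2 * A * Z2 - Z2 * C - Cᵀ * Z2 + B) := by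
  have hZ : Z2ᵀ = Z2 := by rw [Z2]; ext i j; fin_cases i <;> fin_cases j <;> rfl
  rw [eprMat, fromBlocks_transpose, fromBlocks_multiply, fromBlocks_multiply]
  congr 1 <;>
    simp only [transpose_add, transpose_sub, transpose_mul, transpose_transpose, transpose_one,
      transpose_neg, hZ, hA.eq, hB.eq] <;>
    noncomm_ring

lemma det_add_det_add_two_mul_det_eprBlocks {A B C : Matrix (Fin 2) (Fin 2) ℝ} (hA : A.IsSymm)
    (hB : B.IsSymm) :
    (Z2 * A * Z2 + Z2 * C + Cᵀ * Z2 + B).det + (Z2 * A * Z2 - Z2 * C - Cᵀ * Z2 + B).det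
      + 2 * (Z2 * A * Z2 + Cᵀ * Z2 - Z2 * C - B).det = 4 * (A.det + B.det - 2 * C.det) := by
  have ha : A 0 1 = A 1 0 := by simpa using congrFun₂ hA.eq 1 0
  have hb : B 0 1 = B 1 0 := by simpa using congrFun₂ hB.eq 1 0
  simp [det_fin_two, mul_apply, Fin.sum_univ_two, vecMul, dotProduct, Z2, ha, hb]
  ring

lemma IsCovMat.exists_posSemidef_fromBlocks_noiseMat {V : Matrix (Fin 2 ⊕ Fin 2) (Fin 2 ⊕ Fin 2) ℝ}
    (hV : IsCovMat V) :
    ∃ R M : Matrix (Fin 2) (Fin 2) ℝ, (fromBlocks (noiseMat V) R Rᵀ M).PosSemidef ∧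
      (fromBlocks (noiseMat V) R Rᵀ M).det = 16 * V.det ∧
      (noiseMat V).det + M.det + 2 * R.det = 4 * SigmaV V := by
  obtain ⟨hA, hCt, -, hB⟩ := isSymm_fromBlocks_iff.mp ((fromBlocks_toBlocks V).symm ▸ hV.1)
  have hVeq : V = fromBlocks V.toBlocks₁₁ V.toBlocks₁₂ V.toBlocks₁₂ᵀ V.toBlocks₂₂ := by
    rw [hCt, fromBlocks_toBlocks]
  have hP := eprMat_mul_fromBlocks_mul_transpose (C := V.toBlocks₁₂) hA hB
  rw [← hVeq] at hP
  refine ⟨_, _, ?_, ?_, det_add_det_add_two_mul_det_eprBlocks hA hB⟩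
  · rw [noiseMat, ← hP]
    simpa using hV.posSemidef.mul_mul_conjTranspose_same eprMat
  · rw [noiseMat, ← hP, det_mul, det_mul, det_transpose, det_eprMat]
    ring

lemma sub_sqrt_discrim_div_two_le {s d x : ℝ} (h : x < s / 2 → x ^ 2 - s * x + d ≤ 0) :
    (s - √(s ^ 2 - 4 * d)) / 2 ≤ x := by
  rcases le_or_gt (s / 2) x with hx | hx
  · linarith [Real.sqrt_nonneg (s ^ 2 - 4 * d)]
  · have : s - 2 * x ≤ √(s ^ 2 - 4 * d) := Real.le_sqrt_of_sq_le (by nlinarith [h hx])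
    linarith

lemma IsCovMat.noiseMat_posSemidef {V : Matrix (Fin 2 ⊕ Fin 2) (Fin 2 ⊕ Fin 2) ℝ}
    (hV : IsCovMat V) : (noiseMat V).PosSemidef := by
  obtain ⟨R, M, hP, -⟩ := hV.exists_posSemidef_fromBlocks_noiseMat
  exact hP.submatrix Sum.inl

lemma IsCovMat.two_mul_nuPT_le_sqrt_det_noiseMat {V : Matrix (Fin 2 ⊕ Fin 2) (Fin 2 ⊕ Fin 2) ℝ}
    (hV : IsCovMat V) : 2 * nuPT V ≤ √(noiseMat V).det := by
  obtain ⟨R, M, hP, hdetP, hsum⟩ := hV.exists_posSemidef_fromBlocks_noiseMat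
  have hroot : (SigmaV V - √(SigmaV V ^ 2 - 4 * V.det)) / 2 ≤ (noiseMat V).det / 4 := by
    refine sub_sqrt_discrim_div_two_le fun hlt => ?_
    have := det_fromBlocks_le_of_det_lt hP (by linarith)
    rw [hdetP, show M.det + 2 * R.det = 4 * SigmaV V - (noiseMat V).det by linarith] at this
    linarith
  calc 2 * nuPT V ≤ 2 * √((noiseMat V).det / 4) := by rw [nuPT]; gcongr
    _ = √(noiseMat V).det := by
      rw [Real.sqrt_div' _ zero_le_four, show (4 : ℝ) = 2 ^ 2 by norm_num,
        Real.sqrt_sq zero_le_two]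
      ring

theorem fidelity_upper_bound_general (V : Matrix (Fin 2 ⊕ Fin 2) (Fin 2 ⊕ Fin 2) ℝ)
    (hV : IsCovMat V) :
    Fid V ≤ 1 / (1 + nuPT V) := by
  have hN := hV.noiseMat_posSemidef
  have hν := hV.two_mul_nuPT_le_sqrt_det_noiseMat
  have hν0 : 0 ≤ nuPT V := Real.sqrt_nonneg _
  have hsqrt : 2 + 2 * nuPT V ≤ √(4 + 2 * (noiseMat V).trace + (noiseMat V).det) := by
    refine Real.le_sqrt_of_sq_le ?_
    nlinarith [hN.two_mul_sqrt_det_le_trace, Real.sq_sqrt hN.det_nonneg]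
  calc Fid V ≤ 2 / (2 + 2 * nuPT V) := div_le_div_of_nonneg_left zero_le_two (by positivity) hsqrt
    _ = 1 / (1 + nuPT V) := by field_simp

/-- upper bound on the teleportation fidelity. -/
theorem fidelity_upper_bound (V : Matrix (Fin 2 ⊕ Fin 2) (Fin 2 ⊕ Fin 2) ℝ)
    (hV : IsCovMat V) (hnu : nuPT V ≤ 1) :
    Fid V ≤ 1 / (1 + nuPT V) :=
  fidelity_upper_bound_general V hV

end
end

section
/- Let n, m, ν be positive reals with n ≠ m, and set d = (n+m)/2 − ν and λ = (m−n)²/(8ν) − n − m. Then the 4×4 real symmetric matrix V₁ = [[n+λ, 0, −d−λ, 0], [0, n, 0, d], [−d−λ, 0, m+λ, 0], [0, d, 0, m]] is not positive semidefinite (it has a negative eigenvalue). -/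
/-!
Restricted to the coordinates `0, 2`, the matrix `V₁` is `[[n + λ, -d - λ], [-d - λ, m + λ]]`,
whose determinant is the constant coefficient `c₀ = -ν (n + m + ν)` of the first quadratic factor
of the characteristic polynomial of `V₁`. It is negative, whereas every principal `2 × 2` minor of a
positive semidefinite matrix is nonnegative.
-/

open Matrix

open scoped ComplexOrder in
theorem Matrix.PosSemidef.mul_sub_mul_nonneg {ι 𝕜 : Type*} [Fintype ι] [RCLike 𝕜]
    {A : Matrix ι ι 𝕜} (hA : A.PosSemidef) (i j : ι) :
    0 ≤ A i i * A j j - A i j * A j i := by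
  have := (hA.submatrix ![i, j]).det_nonneg
  rwa [det_fin_two] at this

theorem candidate_outer_minor_eq (n m v : ℝ) (hv : v ≠ 0) :
    (n + ((m - n)^2/(8*v) - n - m)) * (m + ((m - n)^2/(8*v) - n - m))
      - (-((n+m)/2 - v) - ((m - n)^2/(8*v) - n - m)) ^ 2 = -(v * (n + m + v)) := by
  field_simp
  ring

theorem nonsymmetric_candidate_not_posSemidef_general (n m v : ℝ)
    (hn : 0 < n) (hm : 0 < m) (hv : 0 < v) :
    ¬ (!![n + ((m - n)^2/(8*v) - n - m), 0, -((n+m)/2 - v) - ((m - n)^2/(8*v) - n - m), 0;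
        0, n, 0, (n+m)/2 - v;
        -((n+m)/2 - v) - ((m - n)^2/(8*v) - n - m), 0, m + ((m - n)^2/(8*v) - n - m), 0;
        0, (n+m)/2 - v, 0, m] : Matrix (Fin 4) (Fin 4) ℝ).PosSemidef := by
  intro h
  have hminor := h.mul_sub_mul_nonneg 0 2
  simp only [of_apply, cons_val, ← sq, candidate_outer_minor_eq n m v hv.ne'] at hminor
  have : 0 < v * (n + m + v) := by positivity
  linarith

/-- the candidate optimal matrix for a nonsymmetric state is unphysical. -/
theorem nonsymmetric_candidate_not_posSemidef (n m v : ℝ)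
    (hn : 0 < n) (hm : 0 < m) (hv : 0 < v) (hnm : n ≠ m) :
    ¬ (!![n + ((m - n)^2/(8*v) - n - m), 0, -((n+m)/2 - v) - ((m - n)^2/(8*v) - n - m), 0;
        0, n, 0, (n+m)/2 - v;
        -((n+m)/2 - v) - ((m - n)^2/(8*v) - n - m), 0, m + ((m - n)^2/(8*v) - n - m), 0;
        0, (n+m)/2 - v, 0, m] : Matrix (Fin 4) (Fin 4) ℝ).PosSemidef :=
  nonsymmetric_candidate_not_posSemidef_general n m v hn hm hv
end

section
/- For every 2×2 real symmetric positive definite matrix N there exists a 2×2 symplectic matrix S (i.e. S J Sᵀ = J, where J = [[0,1],[-1,0]]) such that S N Sᵀ = √(det N)·I. In particular Tr(S N Sᵀ) = 2√(det N) ≤ Tr N, so the symplectic transformation makes the noise matrix proportional to the identity without increasing its trace or changing its determinant. -/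
open Matrix

noncomputable section

/-! With `d = √(det N)`, the 2×2 Cayley–Hamilton identities `adj N + N = (tr N) • 1` and
`N * adj N = d² • 1` show that `A = adj N + d • 1` satisfies `A N A = d² (tr N + 2d) • 1` and
`det A = d (tr N + 2d) > 0`. Rescaling `A` to determinant one gives `S`, and a 2×2 matrix of
determinant one is symplectic since `S J Sᵀ = (det S) • J`. The trace bound is AM–GM:
`(tr N)² - 4 det N = (N₀₀ - N₁₁)² + 4 N₀₁²`. -/

theorem mul_J2_mul_transpose (A : Matrix (Fin 2) (Fin 2) ℝ) : A * J2 * Aᵀ = A.det • J2 := by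
  ext i j
  fin_cases i <;> fin_cases j <;> simp [J2, det_fin_two, mul_apply, Fin.sum_univ_two] <;> ring

section
variable {R : Type*} [CommRing R]

theorem adjugate_add_self_fin_two (N : Matrix (Fin 2) (Fin 2) R) :
    adjugate N + N = N.trace • 1 := by
  ext i j
  fin_cases i <;> fin_cases j <;> simp [adjugate_fin_two, trace_fin_two]; ring

theorem det_add_smul_one_fin_two (M : Matrix (Fin 2) (Fin 2) R) (t : R) :
    (M + t • 1).det = M.det + t * M.trace + t ^ 2 := by
  simp [det_fin_two, trace_fin_two]; ring

theorem det_adjugate_add_smul_one_fin_two (N : Matrix (Fin 2) (Fin 2) R) (d : R)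
    (hd : d ^ 2 = N.det) :
    (adjugate N + d • 1).det = d * (N.trace + 2 * d) := by
  have htr : (adjugate N).trace = N.trace := by
    simp [adjugate_fin_two, trace_fin_two, add_comm]
  rw [det_add_smul_one_fin_two, det_adjugate, htr, Fintype.card_fin, pow_one, ← hd]
  ring

theorem adjugate_add_smul_one_mul_mul_self_fin_two (N : Matrix (Fin 2) (Fin 2) R) (d : R)
    (hd : d ^ 2 = N.det) :
    (adjugate N + d • 1) * N * (adjugate N + d • 1) = (d ^ 2 * (N.trace + 2 * d)) • 1 := by
  have hAN : (adjugate N + d • 1) * N = d ^ 2 • 1 + d • N := by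
    rw [add_mul, adjugate_mul, hd, smul_one_mul]
  calc (adjugate N + d • 1) * N * (adjugate N + d • 1)
      = d ^ 2 • adjugate N + d ^ 3 • 1 + d • (N * adjugate N) + d ^ 2 • N := by
        rw [hAN]; simp only [add_mul, mul_add, smul_mul_assoc, mul_smul_comm, one_mul, mul_one]
        module
    _ = d ^ 2 • (adjugate N + N) + (2 * d ^ 3) • 1 := by rw [mul_adjugate, ← hd]; module
    _ = (d ^ 2 * (N.trace + 2 * d)) • 1 := by rw [adjugate_add_self_fin_two]; module
end

theorem two_mul_sqrt_det_le_trace {N : Matrix (Fin 2) (Fin 2) ℝ} (hN : N.PosSemidef) :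
    2 * √N.det ≤ N.trace := by
  have hsymm : N 1 0 = N 0 1 := by simpa using congrFun (congrFun hN.1 0) 1
  have hdisc : 4 * N.det ≤ N.trace ^ 2 := by
    rw [det_fin_two, trace_fin_two, hsymm]
    nlinarith [sq_nonneg (N 0 0 - N 1 1), sq_nonneg (N 0 1)]
  calc 2 * √N.det = √(4 * N.det) := by
        rw [Real.sqrt_mul (by norm_num), show (4 : ℝ) = 2 ^ 2 by norm_num, Real.sqrt_sq (by norm_num)]
    _ ≤ √(N.trace ^ 2) := Real.sqrt_le_sqrt hdisc
    _ = N.trace := Real.sqrt_sq hN.trace_nonneg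

theorem Matrix.PosDef.exists_det_eq_one_mul_mul_transpose_eq_sqrt_det_smul_one
    {N : Matrix (Fin 2) (Fin 2) ℝ} (hN : N.PosDef) :
    ∃ S : Matrix (Fin 2) (Fin 2) ℝ, S.det = 1 ∧ S * N * Sᵀ = √N.det • 1 := by
  set d := √N.det
  have hd : d ^ 2 = N.det := Real.sq_sqrt hN.det_pos.le
  have hc : 0 < d * (N.trace + 2 * d) := by
    have := Real.sqrt_pos.2 hN.det_pos
    have := hN.trace_pos
    positivity
  set A := adjugate N + d • 1
  have hAT : Aᵀ = A := by
    rw [transpose_add, adjugate_transpose, ← conjTranspose_eq_transpose_of_trivial,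
      hN.isHermitian.eq, transpose_smul, transpose_one]
  refine ⟨(√(d * (N.trace + 2 * d)))⁻¹ • A, ?_, ?_⟩
  · rw [det_smul, det_adjugate_add_smul_one_fin_two N d hd, Fintype.card_fin, inv_pow,
      Real.sq_sqrt hc.le, inv_mul_cancel₀ hc.ne']
  · rw [transpose_smul, hAT, smul_mul_assoc, smul_mul_smul_comm,
      adjugate_add_smul_one_mul_mul_self_fin_two N d hd, smul_smul, ← mul_inv,
      Real.mul_self_sqrt hc.le]
    congr 1
    rw [inv_mul_eq_div, div_eq_iff hc.ne']
    ring

/-- any 2×2 symmetric positive definite noise matrix can be brought to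
√(det N)·I by a symplectic congruence, without increasing the trace. -/
theorem symplectic_diagonalization_of_noise (N : Matrix (Fin 2) (Fin 2) ℝ)
    (hN : N.PosDef) :
    ∃ S : Matrix (Fin 2) (Fin 2) ℝ, S * J2 * Sᵀ = J2 ∧
      S * N * Sᵀ = Real.sqrt N.det • (1 : Matrix (Fin 2) (Fin 2) ℝ) ∧
      (S * N * Sᵀ).trace = 2 * Real.sqrt N.det ∧
      2 * Real.sqrt N.det ≤ N.trace := by
  obtain ⟨S, hdet, hS⟩ := hN.exists_det_eq_one_mul_mul_transpose_eq_sqrt_det_smul_one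
  refine ⟨S, by rw [mul_J2_mul_transpose, hdet, one_smul], hS, ?_,
    two_mul_sqrt_det_le_trace hN.posSemidef⟩
  rw [hS, trace_smul, trace_one, Fintype.card_fin, smul_eq_mul]
  ring
end
end

section
/- Let S be a 2×2 real matrix with 0 < det S < 1 and let G be a 2×2 real symmetric positive semidefinite matrix with det G = (1 − det S)². Then, writing s = det S, there exist 2×2 symplectic matrices T₁, T₂ (i.e. T_k J T_kᵀ = J) such that S = √s · T₂ T₁ and G = (1 − s) · T₂ T₂ᵀ. Hence the minimal noise TGCP map V ↦ S V Sᵀ + G decomposes as the symplectic map T₁, followed by the attenuation of transmissivity √s (V ↦ s·V + (1−s)·I), followed by the symplectic map T₂. -/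
/-!
With `t = 1 - det S`, the matrix `M = G / t` is positive semidefinite of determinant one, so by
Cayley–Hamilton `(M + 1)² = (tr M + 2) M` and `T₂ = (M + 1) / √(tr M + 2)` is a square root of `M`
of determinant one. Then `T₁ = T₂⁻¹ S / √(det S)` has determinant one as well, and for `2 × 2`
matrices determinant one is the same as being symplectic.
-/

open Matrix

noncomputable section

namespace Matrix

variable {R : Type*} [CommRing R]

theorem det_add_one_fin_two (M : Matrix (Fin 2) (Fin 2) R) :
    (M + 1).det = M.det + M.trace + 1 := by
  simp only [det_fin_two, trace_fin_two, add_apply, one_apply_eq, one_apply_ne, ne_eq,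
    zero_ne_one, one_ne_zero, not_false_eq_true, add_zero]
  ring

theorem add_one_mul_self_of_det_eq_one {M : Matrix (Fin 2) (Fin 2) R} (hM : M.det = 1) :
    (M + 1) * (M + 1) = (M.trace + 2) • M := by
  rw [det_fin_two] at hM
  ext i j
  fin_cases i <;> fin_cases j <;>
    simp only [Fin.zero_eta, Fin.mk_one, Fin.isValue, mul_apply, add_apply, smul_apply,
      smul_eq_mul, Fin.sum_univ_two, one_apply_eq, one_apply_ne, ne_eq, zero_ne_one, one_ne_zero,
      not_false_eq_true, add_zero, trace_fin_two] <;> grind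

end Matrix

theorem Matrix.PosSemidef.exists_det_eq_one_mul_transpose_eq {M : Matrix (Fin 2) (Fin 2) ℝ}
    (hM : M.PosSemidef) (hdet : M.det = 1) :
    ∃ R : Matrix (Fin 2) (Fin 2) ℝ, R.det = 1 ∧ R * Rᵀ = M := by
  have htr : 0 < M.trace + 2 := by linarith [hM.trace_nonneg]
  have hsqrt : √(M.trace + 2) * √(M.trace + 2) = M.trace + 2 := Real.mul_self_sqrt htr.le
  have hsqrt0 : √(M.trace + 2) ≠ 0 := by positivity
  refine ⟨(√(M.trace + 2))⁻¹ • (M + 1), ?_, ?_⟩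
  · rw [det_smul, Fintype.card_fin, det_add_one_fin_two, hdet, sq, ← mul_inv, hsqrt]
    field_simp
    ring
  · have hMT : Mᵀ = M := by simpa using hM.isHermitian.eq
    rw [transpose_smul, transpose_add, hMT, transpose_one, smul_mul_smul,
      add_one_mul_self_of_det_eq_one hdet, smul_smul, ← mul_inv, hsqrt, inv_mul_cancel₀ htr.ne',
      one_smul]

theorem mul_mul_transpose_add_eq_of_eq_smul {R n : Type*} [CommRing R] [Fintype n]
    [DecidableEq n]
    {S G T₁ T₂ : Matrix n n R} {r u : R} (hS : S = r • (T₂ * T₁)) (hG : G = u • (T₂ * T₂ᵀ))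
    (V : Matrix n n R) :
    S * V * Sᵀ + G = T₂ * ((r * r) • (T₁ * V * T₁ᵀ) + u • 1) * T₂ᵀ := by
  subst hS hG
  simp only [transpose_smul, transpose_mul, Matrix.mul_add, Matrix.add_mul, Matrix.smul_mul,
    Matrix.mul_smul, smul_smul, Matrix.mul_one, Matrix.mul_assoc]

theorem exists_det_eq_one_decomposition {S G : Matrix (Fin 2) (Fin 2) ℝ}
    (hs0 : 0 < S.det) (hs1 : S.det < 1)
    (hG : G.PosSemidef) (hdetG : G.det = (1 - S.det)^2) :
    ∃ T₁ T₂ : Matrix (Fin 2) (Fin 2) ℝ, T₁.det = 1 ∧ T₂.det = 1 ∧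
      S = √S.det • (T₂ * T₁) ∧ G = (1 - S.det) • (T₂ * T₂ᵀ) := by
  set s := S.det
  have ht : 0 < 1 - s := by linarith
  obtain ⟨T₂, hT₂det, hT₂⟩ := (hG.smul (inv_nonneg.2 ht.le)).exists_det_eq_one_mul_transpose_eq
    (by rw [det_smul, Fintype.card_fin, hdetG, inv_pow, inv_mul_cancel₀ (by positivity)])
  have hsqrt : √s * √s = s := Real.mul_self_sqrt hs0.le
  have hsqrt0 : √s ≠ 0 := by positivity
  have hT₂inv : T₂ * T₂⁻¹ = 1 := mul_nonsing_inv _ (by simp [hT₂det])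
  refine ⟨(√s)⁻¹ • (T₂⁻¹ * S), T₂, ?_, hT₂det, ?_, ?_⟩
  · rw [det_smul, Fintype.card_fin, det_mul, det_nonsing_inv, hT₂det, Ring.inverse_one, one_mul,
      sq, ← mul_inv, hsqrt, inv_mul_cancel₀ hs0.ne']
  · rw [Matrix.mul_smul, ← Matrix.mul_assoc, hT₂inv, Matrix.one_mul, smul_smul,
      mul_inv_cancel₀ hsqrt0, one_smul]
  · rw [hT₂, smul_smul, mul_inv_cancel₀ ht.ne', one_smul]

/-- decomposition of a minimal-noise TGCP map into
symplectic ∘ attenuation ∘ symplectic. -/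
theorem minimal_noise_TGCP_decomposition (S G : Matrix (Fin 2) (Fin 2) ℝ)
    (hs0 : 0 < S.det) (hs1 : S.det < 1)
    (hG : G.PosSemidef) (hdetG : G.det = (1 - S.det)^2) :
    ∃ T₁ T₂ : Matrix (Fin 2) (Fin 2) ℝ,
      T₁ * J2 * T₁ᵀ = J2 ∧ T₂ * J2 * T₂ᵀ = J2 ∧
      S = Real.sqrt S.det • (T₂ * T₁) ∧
      G = (1 - S.det) • (T₂ * T₂ᵀ) ∧
      ∀ V : Matrix (Fin 2) (Fin 2) ℝ,
        S * V * Sᵀ + G =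
          T₂ * (S.det • (T₁ * V * T₁ᵀ) + (1 - S.det) • (1 : Matrix (Fin 2) (Fin 2) ℝ)) * T₂ᵀ := by
  obtain ⟨T₁, T₂, hT₁, hT₂, hS, hG⟩ := exists_det_eq_one_decomposition hs0 hs1 hG hdetG
  refine ⟨T₁, T₂, by rw [mul_J2_mul_transpose, hT₁, one_smul],
    by rw [mul_J2_mul_transpose, hT₂, one_smul], hS, hG, fun V => ?_⟩
  rw [mul_mul_transpose_add_eq_of_eq_smul hS hG, Real.mul_self_sqrt hs0.le]
end
end

section
/- Let n₁, n₂, m₁, m₂, d₁, d₂ be positive reals and define, for r_a, r_b > 0, α(r_a, r_b) = r_a² n₁ − 2 d₁ r_a r_b + r_b² m₁ and β(r_a, r_b) = r_a⁻² n₂ − 2 d₂ (r_a r_b)⁻¹ + r_b⁻² m₂. Then both partial derivatives of α + β vanish at (r_a, r_b) = (1, 1) if and only if n₁ − n₂ = d₁ − d₂ and m₁ − m₂ = d₁ − d₂; moreover, in that case α(1,1) = β(1,1). -/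
/-! At the identity, `∂/∂r_a (α + β) = 2 (n₁ - d₁) - 2 (n₂ - d₂)` and symmetrically in `r_b`,
so criticality is exactly the pair of linear conditions of standard form III; under them
`α 1 1 - β 1 1 = (n₁ - n₂) - 2 (d₁ - d₂) + (m₁ - m₂)` vanishes. -/

lemma hasDerivAt_quadratic_add_inv_quadratic (a b c d e : ℝ) {x : ℝ} (hx : x ≠ 0) :
    HasDerivAt (fun x : ℝ => a * x ^ 2 + b * x + c + d * x⁻¹ + e * x⁻¹ ^ 2)
      (2 * a * x + b - d * (x ^ 2)⁻¹ - 2 * e * (x ^ 3)⁻¹) x := by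
  have hinv : HasDerivAt (fun x : ℝ => x⁻¹) (-(x ^ 2)⁻¹) x := hasDerivAt_inv hx
  have hpoly := (((hasDerivAt_pow 2 x).const_mul a).add ((hasDerivAt_id x).const_mul b)).add_const c
  refine ((hpoly.add (hinv.const_mul d)).add ((hinv.pow 2).const_mul e)).congr_deriv ?_
  norm_num
  field_simp
  ring

lemma deriv_quadratic_add_inv_quadratic_one (a b c d e : ℝ) :
    deriv (fun x : ℝ => a * x ^ 2 + b * x + c + d * x⁻¹ + e * x⁻¹ ^ 2) 1 = 2 * a + b - d - 2 * e := by
  rw [(hasDerivAt_quadratic_add_inv_quadratic a b c d e one_ne_zero).deriv]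
  norm_num

theorem critical_point_iff_standard_form_III_general (n₁ n₂ m₁ m₂ d₁ d₂ : ℝ)
    (α : ℝ → ℝ → ℝ) (β : ℝ → ℝ → ℝ)
    (hα : ∀ ra rb, α ra rb = ra^2 * n₁ - 2 * d₁ * ra * rb + rb^2 * m₁)
    (hβ : ∀ ra rb, β ra rb = ra⁻¹^2 * n₂ - 2 * d₂ * (ra * rb)⁻¹ + rb⁻¹^2 * m₂) :
    ((deriv (fun ra => α ra 1 + β ra 1) 1 = 0 ∧
      deriv (fun rb => α 1 rb + β 1 rb) 1 = 0) ↔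
      (n₁ - n₂ = d₁ - d₂ ∧ m₁ - m₂ = d₁ - d₂)) ∧
    ((n₁ - n₂ = d₁ - d₂ ∧ m₁ - m₂ = d₁ - d₂) → α 1 1 = β 1 1) := by
  have hra : deriv (fun ra => α ra 1 + β ra 1) 1 = 2 * (n₁ - d₁) - 2 * (n₂ - d₂) := by
    have : (fun ra => α ra 1 + β ra 1) =
        fun x => n₁ * x ^ 2 + (-2 * d₁) * x + (m₁ + m₂) + (-2 * d₂) * x⁻¹ + n₂ * x⁻¹ ^ 2 := by
      funext x; rw [hα, hβ]; ring
    rw [this, deriv_quadratic_add_inv_quadratic_one]; ring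
  have hrb : deriv (fun rb => α 1 rb + β 1 rb) 1 = 2 * (m₁ - d₁) - 2 * (m₂ - d₂) := by
    have : (fun rb => α 1 rb + β 1 rb) =
        fun x => m₁ * x ^ 2 + (-2 * d₁) * x + (n₁ + n₂) + (-2 * d₂) * x⁻¹ + m₂ * x⁻¹ ^ 2 := by
      funext x; rw [hα, hβ]; ring
    rw [this, deriv_quadratic_add_inv_quadratic_one]; ring
  refine ⟨?_, fun ⟨hn, hm⟩ => ?_⟩
  · rw [hra, hrb]
    constructor <;> rintro ⟨h₁, h₂⟩ <;> constructor <;> linarith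
  · rw [hα, hβ]; norm_num; linarith

/-- the identity is a critical point of the local squeezing optimization
iff the covariance matrix is in standard form III. -/
theorem critical_point_iff_standard_form_III (n₁ n₂ m₁ m₂ d₁ d₂ : ℝ)
    (hn₁ : 0 < n₁) (hn₂ : 0 < n₂) (hm₁ : 0 < m₁) (hm₂ : 0 < m₂)
    (hd₁ : 0 < d₁) (hd₂ : 0 < d₂)
    (α : ℝ → ℝ → ℝ) (β : ℝ → ℝ → ℝ)
    (hα : ∀ ra rb, α ra rb = ra^2 * n₁ - 2 * d₁ * ra * rb + rb^2 * m₁)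
    (hβ : ∀ ra rb, β ra rb = ra⁻¹^2 * n₂ - 2 * d₂ * (ra * rb)⁻¹ + rb⁻¹^2 * m₂) :
    ((deriv (fun ra => α ra 1 + β ra 1) 1 = 0 ∧
      deriv (fun rb => α 1 rb + β 1 rb) 1 = 0) ↔
      (n₁ - n₂ = d₁ - d₂ ∧ m₁ - m₂ = d₁ - d₂)) ∧
    ((n₁ - n₂ = d₁ - d₂ ∧ m₁ - m₂ = d₁ - d₂) → α 1 1 = β 1 1) :=
  critical_point_iff_standard_form_III_general n₁ n₂ m₁ m₂ d₁ d₂ α β hα hβ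
end

section
/- Let A, B, C be 2×2 real matrices with A and B symmetric, let W_a, W_b be 2×2 real matrices, let ν > 0, and suppose W_a Z A Z W_aᵀ + W_a Z C W_bᵀ + W_b Cᵀ Z W_aᵀ + W_b B W_bᵀ = ν·I, where Z = diag(1,−1). Fix θ with 0 < θ ≤ π/4 and set S_a = (1/cos θ)·Z W_a Z, S_b = (1/cos θ)·W_b, G_a = (1 − tan²θ)·I, G_b = 0. Then for V = [[A,C],[Cᵀ,B]], the transformed matrix V' = (S_a ⊕ S_b) V (S_a ⊕ S_b)ᵀ + (G_a ⊕ G_b), with blocks V' = [[A',C'],[C'ᵀ,B']], has noise matrix N(V') = Z A' Z + Z C' + C'ᵀ Z + B' = (ν/cos²θ + 1 − tan²θ)·I. -/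
open Matrix Real ComplexOrder

noncomputable section

/-- the noise matrix produced by the map ω_θ (branch 0 < θ ≤ π/4). -/
theorem noise_of_omega_theta (A B C Wa Wb : Matrix (Fin 2) (Fin 2) ℝ)
    (hA : A.IsSymm) (hB : B.IsSymm) (ν : ℝ) (hν : 0 < ν)
    (hrel : Wa * Z2 * A * Z2 * Waᵀ + Wa * Z2 * C * Wbᵀ + Wb * Cᵀ * Z2 * Waᵀ + Wb * B * Wbᵀ
      = ν • (1 : Matrix (Fin 2) (Fin 2) ℝ))
    (θ : ℝ) (hθ0 : 0 < θ) (hθ1 : θ ≤ Real.pi / 4) :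
    noiseMat
      (fromBlocks ((1 / Real.cos θ) • (Z2 * Wa * Z2)) 0 0 ((1 / Real.cos θ) • Wb) *
          fromBlocks A C Cᵀ B *
          (fromBlocks ((1 / Real.cos θ) • (Z2 * Wa * Z2)) 0 0 ((1 / Real.cos θ) • Wb))ᵀ +
        fromBlocks ((1 - Real.tan θ ^ 2) • (1 : Matrix (Fin 2) (Fin 2) ℝ)) 0 0 0)
      = (ν / Real.cos θ ^ 2 + 1 - Real.tan θ ^ 2) • (1 : Matrix (Fin 2) (Fin 2) ℝ) := by
  have hZZ : Z2 * Z2 = 1 := by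
    ext i j
    fin_cases i <;> fin_cases j <;>
      simp [Z2, Matrix.mul_apply, Fin.sum_univ_two, Matrix.one_apply]
  have hZt : Z2ᵀ = Z2 := by
    ext i j
    fin_cases i <;> fin_cases j <;> simp [Z2]
  set k := 1 / Real.cos θ with hk
  set g := 1 - Real.tan θ ^ 2 with hg
  simp only [noiseMat, Matrix.fromBlocks_transpose, Matrix.fromBlocks_multiply,
    Matrix.fromBlocks_add, Matrix.toBlocks_fromBlocks₁₁, Matrix.toBlocks_fromBlocks₁₂,
    Matrix.toBlocks_fromBlocks₂₂, Matrix.transpose_zero, Matrix.mul_zero, Matrix.zero_mul,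
    add_zero, zero_add, Matrix.transpose_smul, Matrix.transpose_mul, hZt,
    Matrix.smul_mul, Matrix.mul_smul, Matrix.mul_add, Matrix.add_mul, smul_smul,
    Matrix.transpose_transpose]
  have conj2 : ∀ X : Matrix (Fin 2) (Fin 2) ℝ, X * Z2 * Z2 = X := fun X => by
    rw [Matrix.mul_assoc, hZZ, Matrix.mul_one]
  simp only [← Matrix.mul_assoc]
  simp only [hZZ, conj2, Matrix.one_mul, Matrix.mul_one]
  have hs : ν / Real.cos θ ^ 2 + 1 - Real.tan θ ^ 2 = k * k * ν + g := by
    rw [hk, hg]; ring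
  rw [hs]
  calc (k * k) • (Wa * Z2 * A * Z2 * Waᵀ) + g • (1 : Matrix (Fin 2) (Fin 2) ℝ) +
        (k * k) • (Wa * Z2 * C * Wbᵀ) + (k * k) • (Wb * Cᵀ * Z2 * Waᵀ) +
        (k * k) • (Wb * B * Wbᵀ)
      = (k * k) • (Wa * Z2 * A * Z2 * Waᵀ + Wa * Z2 * C * Wbᵀ + Wb * Cᵀ * Z2 * Waᵀ
          + Wb * B * Wbᵀ) + g • (1 : Matrix (Fin 2) (Fin 2) ℝ) := by
        simp only [smul_add]; abel
    _ = (k * k) • (ν • (1 : Matrix (Fin 2) (Fin 2) ℝ)) + g • 1 := by rw [hrel]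
    _ = (k * k * ν + g) • 1 := by rw [smul_smul, add_smul]
end
end
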